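/- For any locally integrable nonnegative functions $w_0,w_1$ on $\mathbb{R}^n$ with $0<Mw_0,Mw_1<\infty$ a.e., and any $p>1$, the pair of weights $(u,v)=((Mw_0)\, w_1^{1-p},\; w_0\,(Mw_1)^{1-p})$ satisfies the two-weight condition $A_p$: $\sup_Q \big(\tfrac{1}{|Q|}\int_Q v\big)\big(\tfrac{1}{|Q|}\int_Q u^{1-p'}\big)^{p-1} \le C$, with $C$ depending only on dimension and $p$. -/

import Mathlib

/-!
On a cube `Q` every point `x ∈ Q` has `M w x ≥ ⟨w⟩_Q`, and the exponents `1 - p` and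
`1 - p'` are negative, so `⟨v⟩_Q ≤ ⟨w₀⟩_Q ⟨w₁⟩_Q^{1-p}` and
`⟨u^{1-p'}⟩_Q ≤ ⟨w₀⟩_Q^{1-p'} ⟨w₁⟩_Q`. As `(1 - p')(p - 1) = -1`, the product in the
two-weight `A_p` condition is at most `1`.
-/

open MeasureTheory ENNReal Set

noncomputable section

/-- An axis-parallel cube in `ℝⁿ`. -/
def IsCube {n : ℕ} (Q : Set (Fin n → ℝ)) : Prop :=
  ∃ (a : Fin n → ℝ) (r : ℝ), 0 < r ∧ Q = Set.Icc a (fun i => a i + r)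

/-- Average of `w` over a set `Q` (w.r.t. Lebesgue measure). -/
def cubeAvg {n : ℕ} (w : (Fin n → ℝ) → ℝ≥0∞) (Q : Set (Fin n → ℝ)) : ℝ≥0∞ :=
  (∫⁻ x in Q, w x) / volume Q

/-- Hardy–Littlewood maximal operator (over cubes containing the point). -/
def maxOp {n : ℕ} (f : (Fin n → ℝ) → ℝ≥0∞) (x : Fin n → ℝ) : ℝ≥0∞ :=
  ⨆ (Q : Set (Fin n → ℝ)) (_ : IsCube Q) (_ : x ∈ Q), cubeAvg f Q

/-- `M_μ f = (M(f^{1/μ}))^μ`. -/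
def maxOpP {n : ℕ} (μ : ℝ) (f : (Fin n → ℝ) → ℝ≥0∞) (x : Fin n → ℝ) : ℝ≥0∞ :=
  (maxOp (fun y => f y ^ (1 / μ)) x) ^ μ

/-- Muckenhoupt `A_p` constant; for `p = 1` the least `C` with `Mw ≤ C w` a.e. -/
def apConst {n : ℕ} (p : ℝ) (w : (Fin n → ℝ) → ℝ≥0∞) : ℝ≥0∞ :=
  if p = 1 then
    sInf {C : ℝ≥0∞ | ∀ᵐ x ∂(volume : Measure (Fin n → ℝ)), maxOp w x ≤ C * w x}
  else
    ⨆ (Q : Set (Fin n → ℝ)) (_ : IsCube Q),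
      cubeAvg w Q * (cubeAvg (fun x => w x ^ (-1 / (p - 1))) Q) ^ (p - 1)

/-- `A_∞` "constant": infimum of the `A_p` constants over `p > 1`. -/
def ainfConst {n : ℕ} (w : (Fin n → ℝ) → ℝ≥0∞) : ℝ≥0∞ :=
  ⨅ (p : ℝ) (_ : 1 < p), apConst p w

/-- `u(E) = ∫_E u`. -/
def wMeas {n : ℕ} (w : (Fin n → ℝ) → ℝ≥0∞) (E : Set (Fin n → ℝ)) : ℝ≥0∞ :=
  ∫⁻ x in E, w x

/-- `‖g‖_{L^{p,∞}(w)} = sup_y y · w({g>y})^{1/p}`. -/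
def wkNorm {n : ℕ} (p : ℝ) (w g : (Fin n → ℝ) → ℝ≥0∞) : ℝ≥0∞ :=
  ⨆ y : ℝ≥0∞, y * (wMeas w {x | y < g x}) ^ (1 / p)

/-- `‖f‖_{L^p(w)}`. -/
def stNorm {n : ℕ} (p : ℝ) (w f : (Fin n → ℝ) → ℝ≥0∞) : ℝ≥0∞ :=
  (∫⁻ x, f x ^ p * w x) ^ (1 / p)

/-- A locally bounded function `φ : [0,∞] → [0,∞]`. -/
def LocBdd (φ : ℝ≥0∞ → ℝ≥0∞) : Prop :=
  ∀ M : ℝ≥0∞, M ≠ ⊤ → ∃ C : ℝ≥0∞, C ≠ ⊤ ∧ ∀ t ≤ M, φ t ≤ C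

/-- A (a.e.) positive, locally integrable weight. -/
def PosLocInt {n : ℕ} (u : (Fin n → ℝ) → ℝ≥0∞) : Prop :=
  Measurable u ∧ (∀ᵐ x ∂(volume : Measure (Fin n → ℝ)), 0 < u x) ∧
    ∀ Q : Set (Fin n → ℝ), IsCube Q → (∫⁻ x in Q, u x) < ⊤

end

noncomputable section

/-- Two-weight `A_p` constant of a pair `(u, v)`. -/
def twoApConst {n : ℕ} (p : ℝ) (u v : (Fin n → ℝ) → ℝ≥0∞) : ℝ≥0∞ :=
  ⨆ (Q : Set (Fin n → ℝ)) (_ : IsCube Q),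
    cubeAvg v Q * (cubeAvg (fun x => u x ^ (1 - p / (p - 1))) Q) ^ (p - 1)

theorem ENNReal.rpow_le_rpow_of_nonpos {a b : ℝ≥0∞} {z : ℝ} (hab : a ≤ b) (hz : z ≤ 0) :
    b ^ z ≤ a ^ z := by
  rw [← neg_neg z, ENNReal.rpow_neg b, ENNReal.rpow_neg a]
  exact ENNReal.inv_le_inv.mpr (ENNReal.rpow_le_rpow hab (neg_nonneg.mpr hz))

theorem IsCube.measurableSet {n : ℕ} {Q : Set (Fin n → ℝ)} (hQ : IsCube Q) :
    MeasurableSet Q := by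
  obtain ⟨a, r, -, rfl⟩ := hQ
  exact measurableSet_Icc

theorem cubeAvg_le_maxOp {n : ℕ} {Q : Set (Fin n → ℝ)} (hQ : IsCube Q)
    (w : (Fin n → ℝ) → ℝ≥0∞) {x : Fin n → ℝ} (hx : x ∈ Q) : cubeAvg w Q ≤ maxOp w x :=
  le_iSup_of_le Q (le_iSup_of_le hQ (le_iSup_of_le hx le_rfl))

theorem cubeAvg_congr_ae {n : ℕ} {f g : (Fin n → ℝ) → ℝ≥0∞} {Q : Set (Fin n → ℝ)}
    (hfg : f =ᵐ[volume.restrict Q] g) : cubeAvg f Q = cubeAvg g Q := by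
  rw [cubeAvg, cubeAvg, lintegral_congr_ae hfg]

theorem cubeAvg_mul_const_le {n : ℕ} {f g : (Fin n → ℝ) → ℝ≥0∞} {Q : Set (Fin n → ℝ)}
    {c : ℝ≥0∞} (hf : Measurable f) (hg : ∀ᵐ x ∂volume.restrict Q, g x ≤ c) :
    cubeAvg (fun x => f x * g x) Q ≤ cubeAvg f Q * c := by
  have hint : ∫⁻ x in Q, f x * g x ≤ (∫⁻ x in Q, f x) * c := by
    rw [← lintegral_mul_const _ hf]
    exact lintegral_mono_ae (hg.mono fun x hx => mul_le_mul_right hx _)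
  calc cubeAvg (fun x => f x * g x) Q ≤ (∫⁻ x in Q, f x) * c / volume Q :=
        ENNReal.div_le_div_right hint _
    _ = cubeAvg f Q * c := by rw [cubeAvg, div_eq_mul_inv, div_eq_mul_inv, mul_right_comm]

theorem cubeAvg_mul_maxOp_rpow_le {n : ℕ} {w₀ : (Fin n → ℝ) → ℝ≥0∞}
    (w₁ : (Fin n → ℝ) → ℝ≥0∞) {Q : Set (Fin n → ℝ)} {z : ℝ} (hQ : IsCube Q)
    (hw₀ : Measurable w₀) (hz : z ≤ 0) :
    cubeAvg (fun x => w₀ x * maxOp w₁ x ^ z) Q ≤ cubeAvg w₀ Q * cubeAvg w₁ Q ^ z :=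
  cubeAvg_mul_const_le hw₀ <| (ae_restrict_mem hQ.measurableSet).mono fun _ hx =>
    ENNReal.rpow_le_rpow_of_nonpos (cubeAvg_le_maxOp hQ w₁ hx) hz

theorem ENNReal.mul_rpow_neg_rpow_neg_inv {a : ℝ≥0∞} (b : ℝ≥0∞) {r : ℝ} (ha₀ : a ≠ 0)
    (ha : a ≠ ⊤) (hr : r ≠ 0) : (a * b ^ (-r)) ^ (-r⁻¹) = b * a ^ (-r⁻¹) := by
  rw [ENNReal.mul_rpow_eq_ite, if_neg (by simp [ha₀, ha]), ← ENNReal.rpow_mul,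
    neg_mul_neg, mul_inv_cancel₀ hr, ENNReal.rpow_one, mul_comm]

theorem ENNReal.mul_rpow_neg_mul_rpow_le_one (A B : ℝ≥0∞) {r : ℝ} (hr : 0 < r) :
    A * B ^ (-r) * (A ^ (-r⁻¹) * B) ^ r ≤ 1 := by
  calc A * B ^ (-r) * (A ^ (-r⁻¹) * B) ^ r = (A * A⁻¹) * (B ^ r)⁻¹ * B ^ r := by
        rw [ENNReal.mul_rpow_of_nonneg _ _ hr.le, ← ENNReal.rpow_mul, neg_mul,
          inv_mul_cancel₀ hr.ne', ENNReal.rpow_neg_one, ENNReal.rpow_neg]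
        ring
    _ ≤ 1 * 1 := by
        rw [mul_assoc]
        exact mul_le_mul' (ENNReal.mul_inv_le_one A) (ENNReal.inv_mul_le_one _)
    _ = 1 := one_mul 1

theorem stmt4 {n : ℕ} (p : ℝ) (hp : 1 < p) :
    ∃ C : ℝ≥0∞, C < ⊤ ∧
      ∀ w₀ w₁ : (Fin n → ℝ) → ℝ≥0∞, Measurable w₀ → Measurable w₁ →
        (∀ Q : Set (Fin n → ℝ), IsCube Q → (∫⁻ x in Q, w₀ x) < ⊤) →
        (∀ Q : Set (Fin n → ℝ), IsCube Q → (∫⁻ x in Q, w₁ x) < ⊤) →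
        (∀ᵐ x ∂(volume : Measure (Fin n → ℝ)), 0 < maxOp w₀ x ∧ maxOp w₀ x < ⊤) →
        (∀ᵐ x ∂(volume : Measure (Fin n → ℝ)), 0 < maxOp w₁ x ∧ maxOp w₁ x < ⊤) →
        twoApConst p (fun x => maxOp w₀ x * w₁ x ^ (1 - p))
          (fun x => w₀ x * maxOp w₁ x ^ (1 - p)) ≤ C := by
  refine ⟨1, one_lt_top, fun w₀ w₁ hw₀ hw₁ _ _ hMw₀ _ => iSup₂_le fun Q hQ => ?_⟩
  obtain ⟨r, hr, rfl⟩ : ∃ r : ℝ, 0 < r ∧ p = r + 1 := ⟨p - 1, sub_pos.mpr hp, by ring⟩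
  have h_sub : r + 1 - 1 = r := by ring
  have h_conj : 1 - (r + 1) / r = -r⁻¹ := by field_simp; ring
  have h_one_sub : 1 - (r + 1) = -r := by ring
  have hu : cubeAvg (fun x => (maxOp w₀ x * w₁ x ^ (-r)) ^ (-r⁻¹)) Q
      ≤ cubeAvg w₁ Q * cubeAvg w₀ Q ^ (-r⁻¹) := by
    rw [cubeAvg_congr_ae ((ae_restrict_of_ae hMw₀).mono fun x hx =>
      ENNReal.mul_rpow_neg_rpow_neg_inv (w₁ x) hx.1.ne' hx.2.ne hr.ne')]
    exact cubeAvg_mul_maxOp_rpow_le w₀ hQ hw₁ (by simp [hr.le])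
  rw [h_sub, h_conj, h_one_sub]
  calc cubeAvg (fun x => w₀ x * maxOp w₁ x ^ (-r)) Q *
        cubeAvg (fun x => (maxOp w₀ x * w₁ x ^ (-r)) ^ (-r⁻¹)) Q ^ r
      ≤ cubeAvg w₀ Q * cubeAvg w₁ Q ^ (-r) *
          (cubeAvg w₀ Q ^ (-r⁻¹) * cubeAvg w₁ Q) ^ r := by
        gcongr
        · exact cubeAvg_mul_maxOp_rpow_le w₁ hQ hw₀ (neg_nonpos.mpr hr.le)
        · exact hu.trans_eq (mul_comm _ _)
    _ ≤ 1 := ENNReal.mul_rpow_neg_mul_rpow_le_one _ _ hr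

end
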